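/- Bridge builder lemma: for any formula λ, any λ-assured maximal consistent set X, and any formula φ with Rφ ∈ X, there exists a λ-assured maximal consistent set Y such that {φ} ∪ {¬ψ | Rψ ∉ X} ⊆ Y. -/
import Mathlib


/-- Formulas of the awareness logic: propositional variables, ¬, →, and
modalities K (knows about herself), R (de re aware), D (de dicto aware). -/
inductive Formula : Type
  | var : ℕ → Formula
  | neg : Formula → Formula
  | imp : Formula → Formula → Formula
  | K : Formula → Formula
  | R : Formula → Formula
  | D : Formula → Formula
deriving DecidableEq

/-- Truth constant ⊤, defined in the standard way. -/
def fTop : Formula := (Formula.var 0).imp (Formula.var 0)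

/-- False constant ⊥, defined in the standard way. -/
def fBot : Formula := fTop.neg

/-- Disjunction, defined in the standard way from ¬ and →. -/
def fOr (φ ψ : Formula) : Formula := φ.neg.imp ψ

/-- An epistemic model (W, 𝒜, P, ∼, π): presence relation P ⊆ 𝒜 × W,
indistinguishability ∼ₐ an equivalence relation on Pₐ = {w | a P w},
and π(p) ⊆ P. -/
structure EpistemicModel where
  W : Type
  A : Type
  P : A → W → Prop
  indist : A → W → W → Prop
  indist_left : ∀ a w u, indist a w u → P a w
  indist_right : ∀ a w u, indist a w u → P a u
  indist_refl : ∀ a w, P a w → indist a w w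
  indist_symm : ∀ a w u, indist a w u → indist a u w
  indist_trans : ∀ a w u v, indist a w u → indist a u v → indist a w v
  pi : ℕ → A → W → Prop
  pi_sub : ∀ p a w, pi p a w → P a w

/-- The satisfaction relation w,a ⊨ φ. -/
def Sat (M : EpistemicModel) : Formula → M.W → M.A → Prop
  | .var p, w, a => M.pi p a w
  | .neg φ, w, a => ¬ Sat M φ w a
  | .imp φ ψ, w, a => Sat M φ w a → Sat M ψ w a
  | .K φ, w, a => ∀ u, M.P a u → M.indist a w u → Sat M φ u a
  | .R φ, w, a => ∃ b, M.P b w ∧ Sat M φ w b ∧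
      (∀ u, M.P a u → M.indist a w u → M.P b u)
  | .D φ, w, a => ∀ u, M.P a u → M.indist a w u →
      ∃ b, M.P b u ∧ Sat M φ u b

/-- Validity: true at every world-agent pair (with the agent present)
of every epistemic model. -/
def Valid (φ : Formula) : Prop :=
  ∀ (M : EpistemicModel) (w : M.W) (a : M.A), M.P a w → Sat M φ w a

/-- Propositional tautology: true under every boolean valuation of formulas
that respects ¬ and →. -/
def IsTaut (φ : Formula) : Prop :=
  ∀ v : Formula → Bool,
    (∀ ψ, v ψ.neg = !(v ψ)) →
    (∀ ψ χ, v (ψ.imp χ) = (!(v ψ) || v χ)) →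
    v φ = true

/-- Theorems of the awareness proof system. -/
inductive Thm : Formula → Prop
  | taut {φ : Formula} : IsTaut φ → Thm φ
  | truth (φ : Formula) : Thm ((Formula.K φ).imp φ)
  | negIntro (φ : Formula) : Thm ((Formula.K φ).neg.imp (Formula.K (Formula.K φ).neg))
  | distr (φ ψ : Formula) : Thm ((Formula.K (φ.imp ψ)).imp ((Formula.K φ).imp (Formula.K ψ)))
  | selfAwareR (φ : Formula) : Thm (φ.imp (Formula.R φ))
  | selfAwareD (φ : Formula) : Thm ((Formula.K φ).imp (Formula.D φ))
  | introAware (φ : Formula) : Thm ((Formula.D φ).imp (Formula.K (Formula.D φ)))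
  | unawareR : Thm (Formula.R fBot).neg
  | unawareD : Thm (Formula.D fBot).neg
  | disjunct (φ ψ : Formula) : Thm ((Formula.R (fOr φ ψ)).imp (fOr (Formula.R φ) (Formula.R ψ)))
  | genAware (φ : Formula) : Thm ((Formula.D (fOr (Formula.R φ) (Formula.D φ))).imp (Formula.D φ))
  | mp {φ ψ : Formula} : Thm (φ.imp ψ) → Thm φ → Thm ψ
  | nec {φ : Formula} : Thm φ → Thm (Formula.K φ)
  | monoD {φ ψ : Formula} : Thm (φ.imp ψ) → Thm ((Formula.D φ).imp (Formula.D ψ))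
  | monoR {φ ψ : Formula} : Thm (φ.imp ψ) → Thm ((Formula.R φ).imp (Formula.R ψ))

/-- X ⊢ φ: derivable from theorems and X using only Modus Ponens. -/
inductive Deriv (X : Set Formula) : Formula → Prop
  | thm {φ : Formula} : Thm φ → Deriv X φ
  | hyp {φ : Formula} : φ ∈ X → Deriv X φ
  | mp {φ ψ : Formula} : Deriv X (φ.imp ψ) → Deriv X φ → Deriv X ψ

/-- X is consistent if X ⊬ ⊥. -/
def Consistent (X : Set Formula) : Prop := ¬ Deriv X fBot

/-- Maximal consistent set. -/
def MaxConsistent (X : Set Formula) : Prop :=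
  Consistent X ∧ ∀ φ : Formula, φ ∈ X ∨ φ.neg ∈ X

/-- General awareness modality Aχ := Rχ ∨ Dχ. -/
def fA (φ : Formula) : Formula := fOr (Formula.R φ) (Formula.D φ)

/-- n-fold application of A. -/
def fAn : ℕ → Formula → Formula
  | 0, φ => φ
  | n + 1, φ => fA (fAn n φ)

/-- X is λ-assured if X ⊬ Aⁿ¬λ for every n ≥ 0. -/
def Assured (l : Formula) (X : Set Formula) : Prop :=
  ∀ n : ℕ, ¬ Deriv X (fAn n l.neg)

/-! ### Auxiliary lemmas -/

section Aux

open Formula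

lemma taut_id (a : Formula) : Thm (a.imp a) :=
  Thm.taut (by intro v hn hi; simp only [hi]; cases v a <;> rfl)

lemma taut_K' (a b : Formula) : Thm (a.imp (b.imp a)) :=
  Thm.taut (by intro v hn hi; simp only [hi]; cases v a <;> cases v b <;> rfl)

lemma taut_S (a b c : Formula) :
    Thm ((a.imp (b.imp c)).imp ((a.imp b).imp (a.imp c))) := by
  apply Thm.taut
  intro v hn hi
  simp only [hi]
  cases v a <;> cases v b <;> cases v c <;> rfl

lemma taut_chain (a b c : Formula) :
    Thm ((a.imp b).imp ((b.imp c).imp (a.imp c))) := by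
  apply Thm.taut
  intro v hn hi
  simp only [hi]
  cases v a <;> cases v b <;> cases v c <;> rfl

lemma thm_imp_trans {a b c : Formula} (h1 : Thm (a.imp b)) (h2 : Thm (b.imp c)) :
    Thm (a.imp c) :=
  Thm.mp (Thm.mp (taut_chain a b c) h1) h2

lemma taut_absurd (a b : Formula) : Thm (a.imp (a.neg.imp b)) := by
  apply Thm.taut
  intro v hn hi
  simp only [hi, hn]
  cases v a <;> cases v b <;> rfl

lemma taut_cases (a c : Formula) :
    Thm ((a.imp c).imp ((a.neg.imp c).imp c)) := by
  apply Thm.taut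
  intro v hn hi
  simp only [hi, hn]
  cases v a <;> cases v c <;> rfl

lemma taut_exfalso (b : Formula) : Thm (fBot.imp b) := by
  apply Thm.taut
  intro v hn hi
  simp only [fBot, fTop, hi, hn]
  cases v (Formula.var 0) <;> cases v b <;> rfl

lemma Deriv.mono {X Y : Set Formula} {α : Formula} (h : Deriv X α) (hXY : X ⊆ Y) :
    Deriv Y α := by
  induction h with
  | thm h => exact .thm h
  | hyp h => exact .hyp (hXY h)
  | mp _ _ ih1 ih2 => exact .mp ih1 ih2

lemma deriv_empty {α : Formula} (h : Deriv ∅ α) : Thm α := by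
  induction h with
  | thm h => exact h
  | hyp h => exact absurd h (Set.notMem_empty _)
  | mp _ _ ih1 ih2 => exact Thm.mp ih1 ih2

/-- Deduction theorem. -/
lemma deduction {X : Set Formula} {φ ψ : Formula}
    (h : Deriv (insert φ X) ψ) : Deriv X (φ.imp ψ) := by
  induction h with
  | @thm χ h => exact .mp (.thm (taut_K' χ φ)) (.thm h)
  | @hyp χ h =>
    rcases Set.mem_insert_iff.1 h with h | h
    · rw [h]; exact .thm (taut_id φ)
    · exact .mp (.thm (taut_K' χ φ)) (.hyp h)
  | @mp α β _ _ ih1 ih2 =>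
    exact .mp (.mp (.thm (taut_S φ α β)) ih1) ih2

/-- Compactness: every derivation uses a finite list of hypotheses. -/
lemma deriv_list {X : Set Formula} {α : Formula} (h : Deriv X α) :
    ∃ L : List Formula, (∀ χ ∈ L, χ ∈ X) ∧ Deriv {χ | χ ∈ L} α := by
  induction h with
  | @thm χ h => exact ⟨[], by simp, .thm h⟩
  | @hyp χ h => exact ⟨[χ], by simpa using h, .hyp (by simp)⟩
  | @mp α β _ _ ih1 ih2 =>
    obtain ⟨L1, hL1, d1⟩ := ih1
    obtain ⟨L2, hL2, d2⟩ := ih2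
    refine ⟨L1 ++ L2, ?_, ?_⟩
    · intro χ hχ; rcases List.mem_append.1 hχ with h | h
      · exact hL1 χ h
      · exact hL2 χ h
    · refine .mp (d1.mono ?_) (d2.mono ?_)
      · intro χ hχ
        exact List.mem_append.2 (Or.inl hχ)
      · intro χ hχ
        exact List.mem_append.2 (Or.inr hχ)

/-- Big disjunction over a list, accumulator style. -/
def orList : List Formula → Formula → Formula
  | [], α => α
  | ψ :: t, α => orList t (fOr ψ α)

/-- Peeling negative hypotheses into a disjunction. -/
lemma peel (φ : Formula) : ∀ (L : List Formula) (α : Formula),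
    Deriv (L.foldr (fun ψ s => insert ψ.neg s) (insert φ ∅)) α →
    Thm (φ.imp (orList L α)) := by
  intro L
  induction L with
  | nil => intro α h; exact deriv_empty (deduction h)
  | cons ψ t ih =>
    intro α h
    exact ih (fOr ψ α) (deduction h)

lemma mem_foldr_base {φ : Formula} : ∀ (L : List Formula),
    φ ∈ L.foldr (fun ψ s => insert ψ.neg s) (insert φ (∅ : Set Formula)) := by
  intro L
  induction L with
  | nil => exact Set.mem_insert _ _
  | cons ψ t ih => exact Set.mem_insert_iff.2 (Or.inr ih)

lemma mem_foldr_neg {φ ψ : Formula} : ∀ (L : List Formula), ψ ∈ L →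
    ψ.neg ∈ L.foldr (fun χ s => insert χ.neg s) (insert φ (∅ : Set Formula)) := by
  intro L
  induction L with
  | nil => intro h; simp at h
  | cons χ t ih =>
    intro h
    rcases List.mem_cons.1 h with h | h
    · subst h; exact Set.mem_insert _ _
    · exact Set.mem_insert_iff.2 (Or.inr (ih h))

/-- Eliminating disjuncts inside R using disjunctivity. -/
lemma relim {X : Set Formula} : ∀ (L : List Formula) (α : Formula),
    (∀ ψ ∈ L, Deriv X (Formula.R ψ).neg) →
    Deriv X (Formula.R (orList L α)) → Deriv X (Formula.R α) := by
  intro L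
  induction L with
  | nil => intro α _ h; exact h
  | cons ψ t ih =>
    intro α hneg h
    have h1 : Deriv X (Formula.R (fOr ψ α)) :=
      ih (fOr ψ α) (fun χ hχ => hneg χ (List.mem_cons.2 (Or.inr hχ))) h
    have h2 : Deriv X (fOr (Formula.R ψ) (Formula.R α)) :=
      .mp (.thm (Thm.disjunct ψ α)) h1
    exact .mp h2 (hneg ψ (List.mem_cons.2 (Or.inl rfl)))

/-- R implies A (trivially, propositionally). -/
lemma thm_R_A (χ : Formula) : Thm ((Formula.R χ).imp (fA χ)) :=
  taut_absurd (Formula.R χ) (Formula.D χ)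

lemma thm_A_step (χ : Formula) : Thm (χ.imp (fA χ)) :=
  thm_imp_trans (Thm.selfAwareR χ) (thm_R_A χ)

lemma thm_fAn_mono {m n : ℕ} (h : m ≤ n) (χ : Formula) :
    Thm ((fAn m χ).imp (fAn n χ)) := by
  induction n, h using Nat.le_induction with
  | base => exact taut_id _
  | succ n _ ih => exact thm_imp_trans ih (thm_A_step (fAn n χ))

lemma not_assured_iff {l : Formula} {Y : Set Formula} :
    ¬ Assured l Y ↔ ∃ n, Deriv Y (fAn n l.neg) := by
  unfold Assured; push_neg; rfl

/-- A chain of sets has a member containing any finite list of elements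
of the union. -/
lemma chain_list {c : Set (Set Formula)} (hc : IsChain (· ⊆ ·) c)
    (hne : c.Nonempty) : ∀ L : List Formula,
    (∀ χ ∈ L, ∃ s ∈ c, χ ∈ s) → ∃ s ∈ c, ∀ χ ∈ L, χ ∈ s := by
  intro L
  induction L with
  | nil => intro _; obtain ⟨s, hs⟩ := hne; exact ⟨s, hs, by simp⟩
  | cons χ t ih =>
    intro h
    obtain ⟨s, hs, hst⟩ := ih (fun ψ hψ => h ψ (List.mem_cons.2 (Or.inr hψ)))
    obtain ⟨u, hu, hχu⟩ := h χ (List.mem_cons.2 (Or.inl rfl))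
    rcases hc.total hs hu with hsu | hus
    · exact ⟨u, hu, fun ψ hψ => by
        rcases List.mem_cons.1 hψ with h' | h'
        · subst h'; exact hχu
        · exact hsu (hst ψ h')⟩
    · exact ⟨s, hs, fun ψ hψ => by
        rcases List.mem_cons.1 hψ with h' | h'
        · subst h'; exact hus hχu
        · exact hst ψ h'⟩

/-- Assured Lindenbaum: any assured set extends to an assured maximal
consistent set. -/
lemma assured_lindenbaum {l : Formula} {Z : Set Formula}
    (hZ : Assured l Z) :
    ∃ Y : Set Formula, Z ⊆ Y ∧ MaxConsistent Y ∧ Assured l Y := by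
  set S : Set (Set Formula) := {Y | Z ⊆ Y ∧ Assured l Y} with hS
  have hzorn : ∀ c ⊆ S, IsChain (· ⊆ ·) c → c.Nonempty →
      ∃ ub ∈ S, ∀ s ∈ c, s ⊆ ub := by
    intro c hcS hc hne
    refine ⟨⋃₀ c, ⟨?_, ?_⟩, fun s hs => Set.subset_sUnion_of_mem hs⟩
    · obtain ⟨s, hs⟩ := hne
      exact subset_trans (hcS hs).1 (Set.subset_sUnion_of_mem hs)
    · intro n hd
      obtain ⟨L, hL, dL⟩ := deriv_list hd
      obtain ⟨s, hs, hLs⟩ := chain_list hc hne L (fun χ hχ => hL χ hχ)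
      exact (hcS hs).2 n (dL.mono (fun χ hχ => hLs χ hχ))
  obtain ⟨Y, hZY, hYmax⟩ := zorn_subset_nonempty S hzorn Z ⟨subset_refl Z, hZ⟩
  have hYS : Y ∈ S := hYmax.prop
  refine ⟨Y, hZY, ⟨?_, ?_⟩, hYS.2⟩
  · -- consistency
    intro hd
    exact hYS.2 0 (.mp (.thm (taut_exfalso l.neg)) hd)
  · -- maximality
    intro ν
    have key : Assured l (insert ν Y) ∨ Assured l (insert ν.neg Y) := by
      by_contra hcon
      push_neg at hcon
      obtain ⟨h1, h2⟩ := hcon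
      obtain ⟨m1, d1⟩ := not_assured_iff.1 h1
      obtain ⟨n1, d2⟩ := not_assured_iff.1 h2
      set k := max m1 n1 with hk
      have e1 : Deriv Y (ν.imp (fAn k l.neg)) :=
        .mp (.mp (.thm (taut_chain ν _ _)) (deduction d1))
          (.thm (thm_fAn_mono (le_max_left m1 n1) l.neg))
      have e2 : Deriv Y (ν.neg.imp (fAn k l.neg)) :=
        .mp (.mp (.thm (taut_chain ν.neg _ _)) (deduction d2))
          (.thm (thm_fAn_mono (le_max_right m1 n1) l.neg))
      exact hYS.2 k (.mp (.mp (.thm (taut_cases ν (fAn k l.neg))) e1) e2)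
    rcases key with ha | ha
    · left
      have : insert ν Y ∈ S := ⟨subset_trans hZY (Set.subset_insert _ _), ha⟩
      exact hYmax.2 this (Set.subset_insert _ _) (Set.mem_insert _ _)
    · right
      have : insert ν.neg Y ∈ S := ⟨subset_trans hZY (Set.subset_insert _ _), ha⟩
      exact hYmax.2 this (Set.subset_insert _ _) (Set.mem_insert _ _)

/-- Extract ψ from ¬ψ, avoiding a designated formula φ. -/
def extractNeg (φ : Formula) : Formula → Option Formula
  | Formula.neg ψ => if Formula.neg ψ = φ then none else some ψ
  | _ => none

lemma extractNeg_some {φ σ ψ : Formula} (h : extractNeg φ σ = some ψ) :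
    σ = ψ.neg ∧ σ ≠ φ := by
  cases σ with
  | neg χ =>
    by_cases hc : Formula.neg χ = φ
    · simp [extractNeg, hc] at h
    · simp [extractNeg, hc] at h
      subst h; exact ⟨rfl, hc⟩
  | var p => simp [extractNeg] at h
  | imp a b => simp [extractNeg] at h
  | K a => simp [extractNeg] at h
  | R a => simp [extractNeg] at h
  | D a => simp [extractNeg] at h

lemma extractNeg_neg {φ ψ : Formula} (h : ψ.neg ≠ φ) :
    extractNeg φ ψ.neg = some ψ := by simp [extractNeg, h]

end Aux

theorem bridge_builder (l : Formula) (X : Set Formula)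
    (hX : MaxConsistent X) (hassured : Assured l X)
    (φ : Formula) (hφ : Formula.R φ ∈ X) :
    ∃ Y : Set Formula, MaxConsistent Y ∧ Assured l Y ∧
      φ ∈ Y ∧ ∀ ψ : Formula, Formula.R ψ ∉ X → ψ.neg ∈ Y := by
  set Z : Set Formula := insert φ {σ | ∃ ψ, Formula.R ψ ∉ X ∧ σ = ψ.neg} with hZdef
  have hZassured : Assured l Z := by
    intro n hd
    obtain ⟨L, hL, dL⟩ := deriv_list hd
    set L' := L.filterMap (extractNeg φ) with hL'def
    have hclaim2 : ∀ ψ ∈ L', Formula.R ψ ∉ X := by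
      intro ψ hψ
      obtain ⟨σ, hσL, hσf⟩ := List.mem_filterMap.1 hψ
      obtain ⟨hσeq, hσφ⟩ := extractNeg_some hσf
      have hσZ := hL σ hσL
      rcases Set.mem_insert_iff.1 hσZ with h | h
      · exact absurd h hσφ
      · obtain ⟨χ, hχX, hχeq⟩ := h
        have : χ = ψ := by
          have := hχeq.symm.trans hσeq
          exact Formula.neg.injEq χ ψ ▸ this
        subst this; exact hχX
    have hclaim1 : {χ | χ ∈ L} ⊆
        L'.foldr (fun ψ s => insert ψ.neg s) (insert φ ∅) := by
      intro χ hχ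
      have hχL : χ ∈ L := hχ
      have hχZ := hL χ hχL
      by_cases hc : χ = φ
      · subst hc; exact mem_foldr_base L'
      · rcases Set.mem_insert_iff.1 hχZ with h | h
        · exact absurd h hc
        · obtain ⟨ψ, hψX, heq⟩ := h
          subst heq
          have hmem : ψ ∈ L' :=
            List.mem_filterMap.2 ⟨ψ.neg, hχL, extractNeg_neg hc⟩
          exact mem_foldr_neg L' hmem
    have dfold : Deriv (L'.foldr (fun ψ s => insert ψ.neg s) (insert φ ∅))
        (fAn n l.neg) := dL.mono hclaim1
    have hthm : Thm (φ.imp (orList L' (fAn n l.neg))) := peel φ L' _ dfold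
    have hR : Deriv X (Formula.R (orList L' (fAn n l.neg))) :=
      .mp (.thm (Thm.monoR hthm)) (.hyp hφ)
    have hRA : Deriv X (Formula.R (fAn n l.neg)) :=
      relim L' _ (fun ψ hψ =>
        .hyp ((hX.2 (Formula.R ψ)).resolve_left (hclaim2 ψ hψ))) hR
    have hfinal : Deriv X (fAn (n + 1) l.neg) :=
      .mp (.thm (thm_R_A (fAn n l.neg))) hRA
    exact hassured (n + 1) hfinal
  obtain ⟨Y, hZY, hmax, hass⟩ := assured_lindenbaum hZassured
  exact ⟨Y, hmax, hass, hZY (Set.mem_insert _ _),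
    fun ψ h => hZY (Set.mem_insert_iff.2 (Or.inr ⟨ψ, h, rfl⟩))⟩
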